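/- arXiv:2106.07815 — 2 statements merged into one kernel-verified Lean document; each statement's English description precedes it below -/
import Mathlib

section
/- Under independent uniform partitioning of n users into k groups, for any β' ∈ (0,1), with probability at least 1−β', Σ_{j=1}^k ‖f_j − f/k‖₂ ≤ √(nk) + √(2n ln(1/β')). -/
/-!
Write `Δ₁(x) = ∑ⱼ ‖fⱼ - f/k‖` as a function of the assignment `x : Fin n → Fin k`. Moving one
user changes at most two of the group vectors `fⱼ`, each by a unit vector, so `Δ₁` has bounded
differences with constant `2`, and McDiarmid's inequality (Hoeffding's lemma applied to one
coordinate at a time) gives `Δ₁ ≤ 𝔼 Δ₁ + √(2 n log (1/β'))` outside a set of probability `β'`.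
For the mean, `fⱼ - f/k = ∑ᵤ (𝟙[xᵤ = j] - 1/k) eᵥᵤ` is a sum of independent centred terms, so
`𝔼 ‖fⱼ - f/k‖² ≤ n/k` and Cauchy–Schwarz gives `𝔼 Δ₁ ≤ √(nk)`.
-/

open Real Finset

lemma integral_uniformOn_univ {ι : Type*} [Fintype ι] [MeasurableSpace ι]
    [MeasurableSingletonClass ι] (f : ι → ℝ) :
    ∫ i, f i ∂(ProbabilityTheory.uniformOn Set.univ) = (∑ i, f i) / Fintype.card ι := by
  rw [MeasureTheory.integral_fintype (.of_finite), sum_div]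
  refine sum_congr rfl fun i _ => ?_
  simp [MeasureTheory.measureReal_def, ProbabilityTheory.uniformOn_univ, div_eq_inv_mul]

/-- Hoeffding's lemma for the uniform distribution on a finite type. -/
lemma sum_exp_mul_sub_average_le {ι : Type*} [Fintype ι] [Nonempty ι] (X : ι → ℝ) {c : ℝ}
    (hX : ∀ i j, |X i - X j| ≤ c) (l : ℝ) :
    ∑ i, exp (l * (X i - (∑ j, X j) / Fintype.card ι)) ≤
      Fintype.card ι * exp (l ^ 2 * c ^ 2 / 8) := by
  let _ : MeasurableSpace ι := ⊤
  obtain ⟨i₀, -, hmin⟩ := exists_min_image univ X univ_nonempty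
  have hIcc : ∀ i, X i ∈ Set.Icc (X i₀) (X i₀ + c) := fun i =>
    ⟨hmin i (mem_univ i), by linarith [le_of_abs_le (hX i i₀)]⟩
  have hc : 0 ≤ c := (abs_nonneg _).trans (hX i₀ i₀)
  have hoeffding := (ProbabilityTheory.hasSubgaussianMGF_of_mem_Icc
    (μ := ProbabilityTheory.uniformOn Set.univ) (measurable_of_countable X).aemeasurable
    (MeasureTheory.ae_of_all _ hIcc)).mgf_le l
  simp only [ProbabilityTheory.mgf, integral_uniformOn_univ, add_sub_cancel_left] at hoeffding
  rw [div_le_iff₀ (by exact_mod_cast Fintype.card_pos)] at hoeffding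
  refine hoeffding.trans_eq ?_
  rw [mul_comm]
  congr 2
  push_cast
  rw [Real.norm_eq_abs, abs_of_nonneg hc]
  ring

lemma sum_pi_eq_sum_sum_cons {α : Type*} [Fintype α] {n : ℕ} {M : Type*} [AddCommMonoid M]
    (H : (Fin (n + 1) → α) → M) : ∑ x, H x = ∑ y, ∑ a, H (Fin.cons a y) := by
  rw [← (Fin.consEquiv fun _ => α).sum_comp, Fintype.sum_prod_type, sum_comm]
  rfl

section McDiarmid

variable {α : Type*} [Fintype α] [Nonempty α]

lemma abs_average_cons_update_sub_le {n : ℕ} (F : (Fin (n + 1) → α) → ℝ) {c : ℝ}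
    (hF : ∀ x u a, |F (Function.update x u a) - F x| ≤ c) (y : Fin n → α) (u : Fin n) (a : α) :
    |(∑ b, F (Fin.cons b (Function.update y u a))) / Fintype.card α -
      (∑ b, F (Fin.cons b y)) / Fintype.card α| ≤ c := by
  rw [← sub_div, ← sum_sub_distrib, abs_div, Nat.abs_cast, div_le_iff₀ (by positivity)]
  calc _ ≤ ∑ b : α, |F (Fin.cons b (Function.update y u a)) - F (Fin.cons b y)| :=
        abs_sum_le_sum_abs _ _
    _ ≤ ∑ _b : α, c := sum_le_sum fun b _ => by rw [Fin.cons_update]; exact hF _ _ _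
    _ = c * Fintype.card α := by simp [mul_comm]

lemma sum_exp_mul_sub_average_le_of_bounded_differences {n : ℕ} (F : (Fin n → α) → ℝ) {c : ℝ}
    (hF : ∀ x u a, |F (Function.update x u a) - F x| ≤ c) (l : ℝ) :
    ∑ x, exp (l * (F x - (∑ y, F y) / Fintype.card α ^ n)) ≤
      Fintype.card α ^ n * exp (l ^ 2 * n * c ^ 2 / 8) := by
  induction n with
  | zero => simp
  | succ n ih =>
    set m := (∑ y, F y) / (Fintype.card α : ℝ) ^ (n + 1)
    -- `G` averages out the first coordinate: one step of the Doob martingale of `F`.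
    set G : (Fin n → α) → ℝ := fun y => (∑ a, F (Fin.cons a y)) / Fintype.card α with hG
    have hG_avg : (∑ y, G y) / (Fintype.card α : ℝ) ^ n = m := by
      rw [hG, ← sum_div, div_div, ← pow_succ', ← sum_pi_eq_sum_sum_cons F]
    have hfiber : ∀ y, ∑ a, exp (l * (F (Fin.cons a y) - G y)) ≤
        Fintype.card α * exp (l ^ 2 * c ^ 2 / 8) := by
      intro y
      refine sum_exp_mul_sub_average_le (fun a => F (Fin.cons a y)) (fun a b => ?_) l
      simpa [Fin.update_cons_zero] using hF (Fin.cons b y) 0 a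
    calc ∑ x, exp (l * (F x - m))
        = ∑ y, (∑ a, exp (l * (F (Fin.cons a y) - G y))) * exp (l * (G y - m)) := by
          rw [sum_pi_eq_sum_sum_cons]
          refine sum_congr rfl fun y _ => ?_
          rw [sum_mul]
          refine sum_congr rfl fun a _ => ?_
          rw [← exp_add]
          ring_nf
      _ ≤ ∑ y, Fintype.card α * exp (l ^ 2 * c ^ 2 / 8) * exp (l * (G y - m)) :=
          sum_le_sum fun y _ => by gcongr; exact hfiber y
      _ = Fintype.card α * exp (l ^ 2 * c ^ 2 / 8) * ∑ y, exp (l * (G y - m)) := by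
          rw [mul_sum]
      _ ≤ Fintype.card α * exp (l ^ 2 * c ^ 2 / 8) *
            (Fintype.card α ^ n * exp (l ^ 2 * n * c ^ 2 / 8)) := by
          gcongr
          simpa [hG_avg] using ih G (abs_average_cons_update_sub_le F hF)
      _ = Fintype.card α ^ (n + 1) * exp (l ^ 2 * (n + 1 : ℕ) * c ^ 2 / 8) := by
          rw [pow_succ, mul_mul_mul_comm, ← exp_add]
          push_cast
          ring_nf

lemma card_mul_exp_le_sum_exp {ι : Type*} [Fintype ι] (g : ι → ℝ) {l : ℝ} (hl : 0 ≤ l)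
    (t : ℝ) : #{i | t ≤ g i} * exp (l * t) ≤ ∑ i, exp (l * g i) := by
  classical
  calc #{i | t ≤ g i} * exp (l * t) = ∑ i with t ≤ g i, exp (l * t) := by
        rw [sum_const, nsmul_eq_mul]
    _ ≤ ∑ i with t ≤ g i, exp (l * g i) :=
        sum_le_sum fun i hi => exp_le_exp.2 (by gcongr; exact (mem_filter.1 hi).2)
    _ ≤ ∑ i, exp (l * g i) :=
        sum_le_sum_of_subset_of_nonneg (filter_subset _ _) fun _ _ _ => (exp_pos _).le

/-- McDiarmid's inequality, counting form. -/
lemma card_le_sub_average_le_of_bounded_differences {n : ℕ} (F : (Fin n → α) → ℝ) {c : ℝ}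
    (hF : ∀ x u a, |F (Function.update x u a) - F x| ≤ c) {t : ℝ} (ht : 0 ≤ t) :
    (#{x | t ≤ F x - (∑ y, F y) / Fintype.card α ^ n} : ℝ) ≤
      Fintype.card α ^ n * exp (-2 * t ^ 2 / (n * c ^ 2)) := by
  set l := 4 * t / (n * c ^ 2)
  have hexp : l ^ 2 * n * c ^ 2 / 8 - l * t = -2 * t ^ 2 / (n * c ^ 2) := by
    rcases eq_or_ne ((n : ℝ) * c ^ 2) 0 with h | h
    · simp [l, h]
    · simp only [l]
      field_simp
      ring
  have := (card_mul_exp_le_sum_exp _ (by positivity : 0 ≤ l) t).trans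
    (sum_exp_mul_sub_average_le_of_bounded_differences F hF l)
  rwa [← le_div_iff₀ (exp_pos _), mul_div_assoc, ← exp_sub, hexp] at this

end McDiarmid

lemma one_sub_mul_card_le_card_le_add {α : Type*} [Fintype α] (F : α → ℝ) {m M t β : ℝ}
    (hmM : m ≤ M) (htail : (#{x | t ≤ F x - m} : ℝ) ≤ Fintype.card α * β) :
    (1 - β) * Fintype.card α ≤ #{x | F x ≤ M + t} := by
  have hbad : #{x | ¬ F x ≤ M + t} ≤ #{x | t ≤ F x - m} :=
    card_le_card fun x hx => by
      simp only [mem_filter, mem_univ, true_and, not_le] at hx ⊢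
      linarith
  have hsplit : (#{x | F x ≤ M + t} : ℝ) + #{x | ¬ F x ≤ M + t} = Fintype.card α := by
    exact_mod_cast card_filter_add_card_filter_not (s := univ) (fun x => F x ≤ M + t)
  have : (#{x | ¬ F x ≤ M + t} : ℝ) ≤ #{x | t ≤ F x - m} := by exact_mod_cast hbad
  linarith

section Orthogonality

variable {ι G : Type*} [Fintype ι] [DecidableEq ι] [Fintype G]

lemma sum_pi_eq_sum_sum_funSplitAt (u : ι) {M : Type*} [AddCommMonoid M] (F : (ι → G) → M) :
    ∑ x, F x = ∑ a, ∑ y : {i // i ≠ u} → G, F ((Equiv.funSplitAt u G).symm (a, y)) := by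
  rw [← Fintype.sum_prod_type', Equiv.sum_comp]

lemma card_mul_sum_pi_apply (u : ι) (g : G → ℝ) :
    Fintype.card G * ∑ x : ι → G, g (x u) = Fintype.card G ^ Fintype.card ι * ∑ a, g a := by
  have hcard : (Fintype.card G : ℝ) ^ Fintype.card ι =
      Fintype.card G * Fintype.card ({i // i ≠ u} → G) := by
    norm_cast
    rw [← Fintype.card_prod, ← Fintype.card_congr (Equiv.funSplitAt u G), Fintype.card_fun]
  rw [sum_pi_eq_sum_sum_funSplitAt u, hcard]
  simp [mul_sum, mul_assoc]

lemma sum_pi_apply_mul_apply_eq_zero {u u' : ι} (hu : u' ≠ u) (g h : G → ℝ)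
    (hg : ∑ a, g a = 0) : ∑ x : ι → G, g (x u) * h (x u') = 0 := by
  rw [sum_pi_eq_sum_sum_funSplitAt u]
  simp [hu, ← sum_mul, ← mul_sum, hg]

lemma card_mul_sum_pi_norm_sum_smul_sq {E : Type*} [NormedAddCommGroup E]
    [InnerProductSpace ℝ E] (e : G → ℝ) (he : ∑ a, e a = 0) (y : ι → E) :
    Fintype.card G * ∑ x : ι → G, ‖∑ u, e (x u) • y u‖ ^ 2 =
      Fintype.card G ^ Fintype.card ι * (∑ a, e a ^ 2) * ∑ u, ‖y u‖ ^ 2 := by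
  have hpair : ∀ u u', Fintype.card G * ∑ x : ι → G, e (x u) * e (x u') =
      if u' = u then Fintype.card G ^ Fintype.card ι * ∑ a, e a ^ 2 else 0 := by
    intro u u'
    split_ifs with h
    · rw [h]
      simp only [← sq]
      exact card_mul_sum_pi_apply u fun a => e a ^ 2
    · rw [sum_pi_apply_mul_apply_eq_zero h e e he, mul_zero]
  calc Fintype.card G * ∑ x : ι → G, ‖∑ u, e (x u) • y u‖ ^ 2
      = ∑ u, ∑ u', inner ℝ (y u) (y u') *
          (Fintype.card G * ∑ x : ι → G, e (x u) * e (x u')) := by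
        simp only [← real_inner_self_eq_norm_sq, sum_inner, inner_sum, real_inner_smul_left,
          real_inner_smul_right, mul_sum]
        rw [sum_comm]
        refine sum_congr rfl fun u _ => ?_
        rw [sum_comm]
        exact sum_congr rfl fun u' _ => sum_congr rfl fun x _ => by rw [real_inner_comm]; ring
    _ = _ := by
        simp only [hpair, mul_ite, mul_zero, sum_ite_eq', mem_univ, if_true,
          real_inner_self_eq_norm_sq]
        rw [← sum_mul]
        ring

end Orthogonality

section GroupSum

variable {ι G E : Type*} [Fintype ι] [DecidableEq G]

def groupSum [AddCommMonoid E] (y : ι → E) (x : ι → G) (j : G) : E :=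
  ∑ u with x u = j, y u

/-- `Δ₁ = ∑ⱼ ‖fⱼ - f/k‖` with `fⱼ = groupSum y x j`, `f = ∑ᵤ yᵤ` and `k` the number of groups;
the paper's frequency vectors are the case `yᵤ = e_{v u}`, see `groupDeviation_single`. -/
noncomputable def groupDeviation [Fintype G] [NormedAddCommGroup E] [NormedSpace ℝ E]
    (y : ι → E) (x : ι → G) : ℝ :=
  ∑ j, ‖groupSum y x j - (Fintype.card G : ℝ)⁻¹ • ∑ u, y u‖

lemma groupSum_update_sub [DecidableEq ι] [AddCommGroup E] (y : ι → E) (x : ι → G) (u : ι)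
    (b j : G) : groupSum y (Function.update x u b) j - groupSum y x j =
      (if b = j then y u else 0) - (if x u = j then y u else 0) := by
  simp only [groupSum, sum_filter, ← sum_sub_distrib]
  rw [sum_eq_single u (fun u' _ hu' => by simp [Function.update_of_ne hu'])
    (fun h => absurd (mem_univ u) h), Function.update_self]

lemma abs_groupDeviation_update_sub_le [Fintype G] [DecidableEq ι] [NormedAddCommGroup E]
    [NormedSpace ℝ E] (y : ι → E) (x : ι → G) (u : ι) (b : G) :
    |groupDeviation y (Function.update x u b) - groupDeviation y x| ≤ 2 * ‖y u‖ := by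
  set m := (Fintype.card G : ℝ)⁻¹ • ∑ u, y u
  calc |groupDeviation y (Function.update x u b) - groupDeviation y x|
      ≤ ∑ j, |‖groupSum y (Function.update x u b) j - m‖ - ‖groupSum y x j - m‖| := by
        rw [groupDeviation, groupDeviation, ← sum_sub_distrib]
        exact abs_sum_le_sum_abs _ _
    _ ≤ ∑ j, (‖if b = j then y u else 0‖ + ‖if x u = j then y u else 0‖) := by
        refine sum_le_sum fun j _ => (abs_norm_sub_norm_le _ _).trans ?_
        rw [sub_sub_sub_cancel_right, groupSum_update_sub]
        exact norm_sub_le _ _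
    _ = 2 * ‖y u‖ := by
        simp only [apply_ite norm, norm_zero, sum_add_distrib, sum_ite_eq, mem_univ, if_true]
        ring

lemma groupSum_sub_smul_sum [Fintype G] [AddCommGroup E] [Module ℝ E] (y : ι → E)
    (x : ι → G) (j : G) : groupSum y x j - (Fintype.card G : ℝ)⁻¹ • ∑ u, y u =
      ∑ u, ((if x u = j then 1 else 0) - (Fintype.card G : ℝ)⁻¹) • y u := by
  simp only [groupSum, sum_filter, sub_smul, ite_smul, one_smul, zero_smul, sum_sub_distrib,
    smul_sum]

lemma card_mul_sum_pi_norm_groupSum_sub_sq_le [Fintype G] [DecidableEq ι] [NormedAddCommGroup E]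
    [InnerProductSpace ℝ E] (y : ι → E) (j : G) :
    Fintype.card G * ∑ x : ι → G, ‖groupSum y x j - (Fintype.card G : ℝ)⁻¹ • ∑ u, y u‖ ^ 2 ≤
      Fintype.card G ^ Fintype.card ι * ∑ u, ‖y u‖ ^ 2 := by
  have hcard : (Fintype.card G : ℝ) ≠ 0 := by
    have := Fintype.card_pos_iff.2 ⟨j⟩
    positivity
  set e : G → ℝ := fun a => (if a = j then 1 else 0) - (Fintype.card G : ℝ)⁻¹
  have he : ∑ a, e a = 0 := by simp [e, sum_sub_distrib, hcard]
  have he2 : ∑ a, e a ^ 2 ≤ 1 := by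
    calc ∑ a, e a ^ 2
        = ∑ a, (if a = j then e a else 0) - (Fintype.card G : ℝ)⁻¹ * ∑ a, e a := by
          rw [mul_sum, ← sum_sub_distrib]
          refine sum_congr rfl fun a _ => ?_
          split_ifs with h
          · simp only [e, h, if_true, sq]
            ring
          · simp [e, h, sq]
      _ ≤ 1 := by simp [he, e]
  simp only [groupSum_sub_smul_sum]
  rw [card_mul_sum_pi_norm_sum_smul_sq e he y]
  exact mul_le_mul_of_nonneg_right (mul_le_of_le_one_right (by positivity) he2)
    (sum_nonneg fun _ _ => sq_nonneg _)

lemma sum_groupDeviation_le [Fintype G] [DecidableEq ι] [NormedAddCommGroup E]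
    [InnerProductSpace ℝ E] (y : ι → E) : ∑ x : ι → G, groupDeviation y x ≤
      Fintype.card G ^ Fintype.card ι * √(Fintype.card G * ∑ u, ‖y u‖ ^ 2) := by
  set N : ℝ := Fintype.card G ^ Fintype.card ι
  set S := ∑ u, ‖y u‖ ^ 2
  set d : (ι → G) → G → ℝ := fun x j => ‖groupSum y x j - (Fintype.card G : ℝ)⁻¹ • ∑ u, y u‖
  have hCS : (∑ x, ∑ j, d x j) ^ 2 ≤ N * Fintype.card G * ∑ x, ∑ j, d x j ^ 2 := by
    simpa [← Fintype.sum_prod_type', Fintype.card_prod, Fintype.card_fun, N] using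
      sq_sum_le_card_mul_sum_sq (s := univ) (f := fun p : (ι → G) × G => d p.1 p.2)
  have hsq : Fintype.card G * ∑ x, ∑ j, d x j ^ 2 ≤ Fintype.card G * (N * S) := by
    rw [sum_comm, mul_sum]
    calc ∑ j, Fintype.card G * ∑ x, d x j ^ 2 ≤ ∑ _j : G, N * S :=
          sum_le_sum fun j _ => card_mul_sum_pi_norm_groupSum_sub_sq_le y j
      _ = Fintype.card G * (N * S) := by simp
  refine le_of_pow_le_pow_left₀ two_ne_zero (by positivity) ?_
  calc (∑ x, groupDeviation y x) ^ 2 ≤ N * (Fintype.card G * (N * S)) := by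
        rw [mul_assoc] at hCS
        exact hCS.trans (mul_le_mul_of_nonneg_left hsq (by positivity))
    _ = (N * √(Fintype.card G * S)) ^ 2 := by
        rw [mul_pow, sq_sqrt (by positivity)]
        ring

lemma groupDeviation_single {D : Type*} [Fintype D] [DecidableEq D] {k : ℕ} (v : ι → D)
    (x : ι → Fin k) :
    groupDeviation (fun u => EuclideanSpace.single (v u) (1 : ℝ)) x =
      ∑ j, √(∑ w, ((#{u | x u = j ∧ v u = w} : ℝ) - (#{u | v u = w} : ℝ) / k) ^ 2) := by
  refine sum_congr rfl fun j _ => ?_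
  simp [groupSum, EuclideanSpace.norm_eq, Pi.single_apply, sum_boole, filter_filter, eq_comm,
    div_eq_inv_mul]

end GroupSum

/-- Independent uniform partitioning of `n` users into `k` groups: for any
`β' ∈ (0,1)`, with probability at least `1 - β'` (over the `k^n` equally likely
assignments), `Σ_j ‖f_j - f/k‖₂ ≤ √(nk) + √(2n ln(1/β'))`. -/
theorem delta1_high_probability (n k : ℕ) (hk : 0 < k) {D : Type*} [Fintype D]
    [DecidableEq D] (v : Fin n → D) (β' : ℝ) (hβ0 : 0 < β') (hβ1 : β' < 1) :
    (1 - β') * (k : ℝ) ^ n ≤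
      (Set.ncard {x : Fin n → Fin k |
        ∑ j : Fin k, Real.sqrt (∑ w : D,
          (((Finset.univ.filter fun u => x u = j ∧ v u = w).card : ℝ) -
            ((Finset.univ.filter fun u => v u = w).card : ℝ) / k) ^ 2) ≤
          Real.sqrt ((n : ℝ) * k) + Real.sqrt (2 * n * Real.log (1 / β'))} : ℝ) := by
  rcases Nat.eq_zero_or_pos n with rfl | hn
  · simp [hβ0.le]
  have : Nonempty (Fin k) := ⟨⟨0, hk⟩⟩
  set y : Fin n → EuclideanSpace ℝ D := fun u => EuclideanSpace.single (v u) 1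
  set F : (Fin n → Fin k) → ℝ := groupDeviation y
  set t := √(2 * n * log (1 / β'))
  have hy : ∀ u, ‖y u‖ = 1 := by simp [y]
  have hF : ∀ x u b, |F (Function.update x u b) - F x| ≤ 2 := by
    simpa [hy] using abs_groupDeviation_update_sub_le y
  have hcard : (Fintype.card (Fin n → Fin k) : ℝ) = k ^ n := by simp
  have hmean : (∑ x, F x) / Fintype.card (Fin n → Fin k) ≤ √(n * k) := by
    rw [hcard, div_le_iff₀ (by positivity)]
    simpa [hy, mul_comm] using sum_groupDeviation_le (G := Fin k) y
  have hβ : exp (-2 * t ^ 2 / (n * 2 ^ 2)) = β' := by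
    have hlog : 0 ≤ log (1 / β') := log_nonneg (one_le_one_div hβ0 hβ1.le)
    have hexponent : -2 * (2 * n * log (1 / β')) / (n * 2 ^ 2) = -log (1 / β') := by field_simp
    rw [sq_sqrt (by positivity), hexponent, exp_neg, exp_log (by positivity), one_div, inv_inv]
  have htail := card_le_sub_average_le_of_bounded_differences F hF (t := t) (sqrt_nonneg _)
  rw [Fintype.card_fin, hβ, ← hcard] at htail
  simp only [← groupDeviation_single, Set.ncard_eq_toFinset_card', Set.toFinset_ofPred, ← hcard]
  exact one_sub_mul_card_le_card_le_add F hmean htail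
end

section
/- (Correctness of prefix-tree search) Let Λ be an alphabet, D = Λ^L, and f: ∪_{τ≤L} Λ^τ → ℝ a frequency function satisfying f(s[1:τ]) ≥ f(s) for every string s and prefix length τ. Suppose estimates f̂ satisfy |f̂(s) − f(s)| ≤ λ for all s in the candidate set Γ = ∪_{0≤τ<L} Γ_τ × Λ, where Γ_0 = {⊥} and Γ_τ = {s ∈ Λ^τ : f(s) ≥ λ}. Define P_0 = {⊥} and P_τ = {s ∈ P_{τ−1} × Λ : f̂(s) ≥ 2λ}. Then for every τ ∈ [L] and s ∈ Λ^τ: (i) if f(s) ≥ 3λ then s ∈ P_τ; (ii) if f(s) < λ then s ∉ P_τ; and consequently P_τ ⊆ Γ_τ. -/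
/-- The search sets of the prefix-tree algorithm: `P_0 = {⊥}` and
`P_{τ+1} = {s ∈ P_τ × Λ : f̂(s) ≥ 2λ}`. -/
def searchSets {Λ : Type*} (fhat : List Λ → ℝ) (lam : ℝ) : ℕ → Set (List Λ)
  | 0 => {[]}
  | τ + 1 => {s | ∃ t ∈ searchSets fhat lam τ, ∃ a : Λ, s = t ++ [a] ∧ 2 * lam ≤ fhat s}

/-- The candidate sets: `Γ_0 = {⊥}` and, for `τ ≥ 1`,
`Γ_τ = {s ∈ Λ^τ : f(s) ≥ λ}`. -/
def candSets {Λ : Type*} (f : List Λ → ℝ) (lam : ℝ) : ℕ → Set (List Λ) := fun τ =>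
  if τ = 0 then {[]} else {s | s.length = τ ∧ lam ≤ f s}

/-!
Both claims are proved by induction on `τ`, peeling off the last letter: `s = t ++ [a]`.
If `t ∈ P_τ ⊆ Γ_τ`, then `s` is a candidate, so `f̂(s)` is `λ`-accurate. Hence `f̂(s) ≥ 2λ` forces
`f(s) ≥ λ`, which gives `P_{τ+1} ⊆ Γ_{τ+1}`. Conversely, if `f(s) ≥ 3λ`, then `f(t) ≥ f(s) ≥ 3λ`
by monotonicity, so `t ∈ P_τ ⊆ Γ_τ`, and then `f̂(s) ≥ f(s) - λ ≥ 2λ`.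
-/

section candSets

variable {Λ : Type*} {f : List Λ → ℝ} {lam : ℝ} {τ : ℕ} {s : List Λ}

theorem mem_candSets_of_length_eq (hs : s.length = τ) (hf : lam ≤ f s) :
    s ∈ candSets f lam τ := by
  unfold candSets
  split_ifs with hτ
  · exact List.length_eq_zero_iff.mp (hs.trans hτ)
  · exact ⟨hs, hf⟩

theorem length_eq_of_mem_candSets (hs : s ∈ candSets f lam τ) : s.length = τ := by
  unfold candSets at hs
  split_ifs at hs with hτ
  · rw [Set.mem_singleton_iff.mp hs, hτ, List.length_nil]
  · exact hs.1

theorem le_of_mem_candSets (hτ : τ ≠ 0) (hs : s ∈ candSets f lam τ) : lam ≤ f s := by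
  unfold candSets at hs
  rw [if_neg hτ] at hs
  exact hs.2

end candSets

section searchSets

variable {Λ : Type*} {L : ℕ} {f fhat : List Λ → ℝ} {lam : ℝ}

theorem searchSets_subset_candSets
    (hest : ∀ s : List Λ,
      (∃ τ < L, ∃ t ∈ candSets f lam τ, ∃ a : Λ, s = t ++ [a]) → |fhat s - f s| ≤ lam) :
    ∀ τ ≤ L, searchSets fhat lam τ ⊆ candSets f lam τ
  | 0, _ => by simp [searchSets, candSets]
  | τ + 1, hτL => by
    rintro s ⟨t, htP, a, rfl, hfhat⟩
    have htΓ := searchSets_subset_candSets hest τ (by omega) htP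
    have hacc := abs_le.mp (hest _ ⟨τ, by omega, t, htΓ, a, rfl⟩)
    refine mem_candSets_of_length_eq ?_ (by linarith [hacc.2])
    simp [length_eq_of_mem_candSets htΓ]

theorem mem_searchSets_of_three_mul_le (hmono : ∀ s t : List Λ, s <+: t → f t ≤ f s)
    (hest : ∀ s : List Λ,
      (∃ τ < L, ∃ t ∈ candSets f lam τ, ∃ a : Λ, s = t ++ [a]) → |fhat s - f s| ≤ lam) :
    ∀ τ ≤ L, ∀ s : List Λ, s.length = τ → 3 * lam ≤ f s → s ∈ searchSets fhat lam τ
  | 0, _, s, hs, _ => by simp [searchSets, List.length_eq_zero_iff.mp hs]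
  | τ + 1, hτL, s, hs, hf => by
    obtain rfl | ⟨t, a, rfl⟩ := s.eq_nil_or_concat'
    · simp at hs
    have ht : t.length = τ := by simpa using hs
    have hft : f (t ++ [a]) ≤ f t := hmono _ _ (List.prefix_append t [a])
    have htP := mem_searchSets_of_three_mul_le hmono hest τ (by omega) t ht (hf.trans hft)
    have htΓ := searchSets_subset_candSets hest τ (by omega) htP
    have hacc := abs_le.mp (hest _ ⟨τ, by omega, t, htΓ, a, rfl⟩)
    exact ⟨t, htP, a, rfl, by linarith [hacc.1]⟩

end searchSets

theorem prefix_tree_search_correct_general {Λ : Type*} (L : ℕ) (f fhat : List Λ → ℝ)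
    (lam : ℝ)
    (hmono : ∀ s t : List Λ, s <+: t → f t ≤ f s)
    (hest : ∀ s : List Λ,
      (∃ τ < L, ∃ t ∈ candSets f lam τ, ∃ a : Λ, s = t ++ [a]) →
        |fhat s - f s| ≤ lam) :
    ∀ τ, 1 ≤ τ → τ ≤ L → ∀ s : List Λ, s.length = τ →
      ((3 * lam ≤ f s → s ∈ searchSets fhat lam τ) ∧
        (f s < lam → s ∉ searchSets fhat lam τ)) ∧
      searchSets fhat lam τ ⊆ candSets f lam τ := by
  intro τ hτ hτL s hs
  have hsub := searchSets_subset_candSets hest τ hτL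
  refine ⟨⟨mem_searchSets_of_three_mul_le hmono hest τ hτL s hs, ?_⟩, hsub⟩
  intro hf hsP
  exact hf.not_ge (le_of_mem_candSets (by omega) (hsub hsP))

/-- Correctness of prefix-tree search: if the frequency function `f` is monotone
under prefixes and the estimates `f̂` are `λ`-accurate on the candidate set
`Γ = ∪_{0 ≤ τ < L} Γ_τ × Λ`, then for every `τ ∈ [L]` and string `s` of length `τ`:
(i) `f(s) ≥ 3λ` implies `s ∈ P_τ`; (ii) `f(s) < λ` implies `s ∉ P_τ`; and
consequently `P_τ ⊆ Γ_τ`. -/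
theorem prefix_tree_search_correct {Λ : Type*} (L : ℕ) (f fhat : List Λ → ℝ)
    (lam : ℝ) (hlam : 0 < lam)
    (hmono : ∀ s t : List Λ, s <+: t → f t ≤ f s)
    (hest : ∀ s : List Λ,
      (∃ τ < L, ∃ t ∈ candSets f lam τ, ∃ a : Λ, s = t ++ [a]) →
        |fhat s - f s| ≤ lam) :
    ∀ τ, 1 ≤ τ → τ ≤ L → ∀ s : List Λ, s.length = τ →
      ((3 * lam ≤ f s → s ∈ searchSets fhat lam τ) ∧
        (f s < lam → s ∉ searchSets fhat lam τ)) ∧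
      searchSets fhat lam τ ⊆ candSets f lam τ :=
  prefix_tree_search_correct_general L f fhat lam hmono hest
end
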